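/- arXiv:1905.00489 — 7 statements merged into one kernel-verified Lean document; each statement's English description precedes it below -/
import Mathlib

section
/- Let m, n ≥ 1, let A ∈ ℝ^{m×n} and b ∈ ℝ^m. The max-plus linear system AX=b has a solution x ∈ ℝ^n if and only if every row of the associated normalized matrix Q contains at least one column minimum element, i.e. for every i ∈ {1,…,m} there exists j ∈ {1,…,n} with q_{ij} = min_{1≤i'≤m} q_{i'j}. -/
open Finset

/-- `x` is a solution of the max-plus linear system `AX = b`:
for every row `i`, `max_j (a_{ij} + x_j) = b_i`. -/
def IsMaxPlusSolution {m n : ℕ} (hn : 0 < n) (A : Fin m → Fin n → ℝ)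
    (b : Fin m → ℝ) (x : Fin n → ℝ) : Prop :=
  ∀ i : Fin m, (univ.sup' ⟨⟨0, hn⟩, mem_univ _⟩ fun j => A i j + x j) = b i

private lemma inf'_sub_const {α : Type*} (s : Finset α) (hs : s.Nonempty)
    (f : α → ℝ) (c : ℝ) :
    s.inf' hs (fun a => f a - c) = s.inf' hs f - c := by
  apply le_antisymm
  · obtain ⟨a, ha, hae⟩ := Finset.exists_mem_eq_inf' hs f
    rw [hae]
    exact Finset.inf'_le _ ha
  · apply Finset.le_inf'
    intro a ha
    have := Finset.inf'_le f ha
    linarith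

/-- The max-plus system `AX = b` has a solution iff every row of the associated
normalized matrix `Q`, `q_{ij} = (b_i - b̂) - (a_{ij} - Â_j)`, contains at least one
column minimum element. -/
theorem stmt_0 (m n : ℕ) (hm : 0 < m) (hn : 0 < n)
    (A : Fin m → Fin n → ℝ) (b : Fin m → ℝ) (Q : Fin m → Fin n → ℝ)
    (hQ : ∀ i j, Q i j =
      (b i - (∑ i', b i') / (m : ℝ)) - (A i j - (∑ i', A i' j) / (m : ℝ))) :
    (∃ x : Fin n → ℝ, IsMaxPlusSolution hn A b x) ↔
      ∀ i : Fin m, ∃ j : Fin n,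
        Q i j = univ.inf' ⟨⟨0, hm⟩, mem_univ _⟩ fun i' => Q i' j := by
  have hinh : (⟨⟨0, hm⟩, mem_univ (⟨0, hm⟩ : Fin m)⟩ : (univ : Finset (Fin m)).Nonempty) = ⟨⟨0, hm⟩, mem_univ _⟩ := rfl
  set g : Fin n → Fin m → ℝ := fun j i' => b i' - A i' j with hg
  have key : ∀ i j, (Q i j = univ.inf' ⟨⟨0, hm⟩, mem_univ _⟩ fun i' => Q i' j) ↔
      b i - A i j = univ.inf' ⟨⟨0, hm⟩, mem_univ _⟩ (g j) := by
    intro i j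
    have hc : ∀ i' : Fin m, Q i' j =
        g j i' - ((∑ i', b i') / (m : ℝ) - (∑ i', A i' j) / (m : ℝ)) := by
      intro i'
      rw [hQ]
      simp only [hg]
      ring
    have h1 : (univ.inf' (⟨⟨0, hm⟩, mem_univ _⟩ : (univ : Finset (Fin m)).Nonempty)
        fun i' => Q i' j) =
        univ.inf' ⟨⟨0, hm⟩, mem_univ _⟩ (g j)
          - ((∑ i', b i') / (m : ℝ) - (∑ i', A i' j) / (m : ℝ)) := by
      refine Eq.trans ?_ (inf'_sub_const _ _ _ _)
      exact Finset.inf'_congr _ rfl (fun i' _ => hc i')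
    rw [h1, hc i]
    constructor
    · intro h; linarith
    · intro h; simp only [hg] at h ⊢; linarith
  constructor
  · rintro ⟨x, hx⟩ i
    obtain ⟨j, hj, hje⟩ := Finset.exists_mem_eq_sup' (⟨⟨0, hn⟩, mem_univ _⟩ :
      (univ : Finset (Fin n)).Nonempty) (fun j => A i j + x j)
    have hxj : A i j + x j = b i := by rw [← hx i, hje]
    refine ⟨j, (key i j).2 ?_⟩
    have hle : ∀ i' : Fin m, x j ≤ b i' - A i' j := by
      intro i'
      have h2 := Finset.le_sup' (fun j => A i' j + x j) (mem_univ j)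
      rw [hx i'] at h2
      linarith
    apply le_antisymm
    · have : b i - A i j = x j := by linarith
      rw [this]
      exact Finset.le_inf' _ _ (fun i' _ => hle i')
    · exact Finset.inf'_le _ (mem_univ i)
  · intro h
    refine ⟨fun j => univ.inf' ⟨⟨0, hm⟩, mem_univ _⟩ (g j), ?_⟩
    intro i
    apply le_antisymm
    · apply Finset.sup'_le
      intro j _
      have h2 := Finset.inf'_le (g j) (mem_univ i)
      simp only [hg] at h2
      linarith
    · obtain ⟨j, hj⟩ := h i
      have h3 := (key i j).1 hj
      have h4 := Finset.le_sup' (fun j => A i j +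
        univ.inf' (⟨⟨0, hm⟩, mem_univ _⟩ : (univ : Finset (Fin m)).Nonempty) (g j)) (mem_univ j)
      rw [← h3] at h4
      calc b i = A i j + (b i - A i j) := by ring
        _ ≤ _ := h4
end

section
/- Let m, n ≥ 1, let A ∈ ℝ^{m×n} and b ∈ ℝ^m, and let Q be the associated normalized matrix. Fix i ∈ {1,…,m} and suppose that row i of Q contains exactly one column minimum element, located in column j (that is, q_{ij} = min_{1≤i'≤m} q_{i'j}, and for every j' ≠ j one has q_{ij'} > min_{1≤i'≤m} q_{i'j'}). Then every solution x ∈ ℝ^n of the max-plus linear system AX=b satisfies x_j = b_i − a_{ij} = min_{1≤i'≤m}(b_{i'} − a_{i'j}); in particular the variable x_j takes the same value in all solutions (x_j is a leading variable). -/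
/-
Every term `a_{i'j} + x_j` of a solution is bounded by `b_{i'}`, so `x_j ≤ b_{i'} - a_{i'j}` for all
`i'`. The maximum in row `i` is attained at some column `j₀`, where `x_{j₀} = b_i - a_{ij₀}` is then
the minimum of column `j₀` of `b - A`. Within a column, `Q` differs from `b - A` by a constant, so
`q_{ij₀}` is a column minimum of `Q`; by uniqueness `j₀ = j`.
-/

open Finset

theorem normalized_le_normalized_iff {ι κ : Type*} {A Q : ι → κ → ℝ} {b : ι → ℝ} {β : ℝ}
    {α : κ → ℝ} (hQ : ∀ i j, Q i j = (b i - β) - (A i j - α j)) (i₁ i₂ : ι) (j : κ) :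
    Q i₁ j ≤ Q i₂ j ↔ b i₁ - A i₁ j ≤ b i₂ - A i₂ j := by
  rw [hQ, hQ]
  constructor <;> intro h <;> linarith

namespace IsMaxPlusSolution

variable {m n : ℕ} {hn : 0 < n} {A : Fin m → Fin n → ℝ} {b : Fin m → ℝ} {x : Fin n → ℝ}

theorem le_sub (hx : IsMaxPlusSolution hn A b x) (i : Fin m) (j : Fin n) :
    x j ≤ b i - A i j := by
  have : A i j + x j ≤ b i := hx i ▸ le_sup' (fun j' => A i j' + x j') (mem_univ j)
  linarith

theorem exists_eq_sub (hx : IsMaxPlusSolution hn A b x) (i : Fin m) :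
    ∃ j, x j = b i - A i j := by
  obtain ⟨j, -, hj⟩ := exists_mem_eq_sup' ⟨⟨0, hn⟩, mem_univ _⟩ fun j' => A i j' + x j'
  refine ⟨j, ?_⟩
  linarith [hx i]

theorem exists_eq_sub_and_forall_le (hx : IsMaxPlusSolution hn A b x) (i : Fin m) :
    ∃ j, x j = b i - A i j ∧ ∀ i', b i - A i j ≤ b i' - A i' j := by
  obtain ⟨j, hj⟩ := hx.exists_eq_sub i
  exact ⟨j, hj, fun i' => hj ▸ hx.le_sub i' j⟩

end IsMaxPlusSolution

/-- If row `i` of the associated normalized matrix `Q` contains exactly one column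
minimum element, located in column `j`, then every solution `x` of the max-plus system
`AX = b` satisfies `x_j = b_i - a_{ij} = min_{i'} (b_{i'} - a_{i'j})`. -/
theorem stmt_7 (m n : ℕ) (hm : 0 < m) (hn : 0 < n)
    (A : Fin m → Fin n → ℝ) (b : Fin m → ℝ) (Q : Fin m → Fin n → ℝ)
    (hQ : ∀ i j, Q i j =
      (b i - (∑ i', b i') / (m : ℝ)) - (A i j - (∑ i', A i' j) / (m : ℝ)))
    (i : Fin m) (j : Fin n)
    (hmin : Q i j = univ.inf' ⟨⟨0, hm⟩, mem_univ _⟩ fun i' => Q i' j)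
    (huniq : ∀ j' : Fin n, j' ≠ j →
      Q i j' > univ.inf' ⟨⟨0, hm⟩, mem_univ _⟩ fun i' => Q i' j') :
    ∀ x : Fin n → ℝ, IsMaxPlusSolution hn A b x →
      x j = b i - A i j ∧
        b i - A i j = univ.inf' ⟨⟨0, hm⟩, mem_univ _⟩ fun i' => b i' - A i' j := by
  intro x hx
  have hcol := normalized_le_normalized_iff hQ
  obtain ⟨j₀, hxj₀, hj₀⟩ := hx.exists_eq_sub_and_forall_le i
  have hj₀j : j₀ = j := by
    by_contra hne
    obtain ⟨i', -, hlt⟩ := (inf'_lt_iff _).1 (huniq j₀ hne)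
    exact ((hcol i i' j₀).2 (hj₀ i')).not_gt hlt
  have hjmin : ∀ i', b i - A i j ≤ b i' - A i' j := fun i' =>
    (hcol i i' j).1 (hmin ▸ inf'_le _ (mem_univ i'))
  exact ⟨hj₀j ▸ hxj₀, le_antisymm (le_inf' _ _ fun i' _ => hjmin i') (inf'_le _ (mem_univ i))⟩
end

section
/- Let m, n ≥ 1, let A ∈ ℝ^{m×n} and b ∈ ℝ^m, let J be a nonempty subset of the column indices {1,…,n}, and suppose that for each j ∉ J there exist real scalars η_{ij} (i ∈ J) with a_{kj} = max_{i∈J}(a_{ki} + η_{ij}) for every row k. If x ∈ ℝ^n is a solution of the max-plus linear system AX=b, then the vector y ∈ ℝ^J defined by y_i = max(x_i, max_{j∉J}(η_{ij} + x_j)) (where the inner max is omitted if J = {1,…,n}) is a solution of the column-restricted system with matrix (a_{ki})_{k∈{1,…,m}, i∈J} and right-hand side b. -/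
open Finset

/-!
Fix a row `a` of `A` and let `S = max_j (a_j + x_j)`. Every term obeys `x_j ≤ S - a_j`, and the
dependency relation gives `a_i + η_{ij} ≤ a_j`, so every candidate `η_{ij} + x_j` for `y_i` is also
at most `S - a_i`; hence `max_{i ∈ J} (a_i + y_i) ≤ S`. Conversely, a column `j ∉ J` is realised as
`a_j = a_i + η_{ij}` for some `i ∈ J`, and `η_{ij} + x_j ≤ y_i`, so each term of `S` is dominated
by a term of the restricted maximum.
-/

section ReducedSolution

variable {ι α : Type*} [Fintype ι] [DecidableEq ι] [LinearOrder α]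

/-- The coordinate `y_i = max (x_i, max_{j ∉ J} (η_{ij} + x_j))` of the reduced solution. -/
def reducedCoord [Add α] (J : Finset ι) (η : ι → ι → α) (x : ι → α) (i : ι) : α :=
  (insert i Jᶜ).sup' ⟨i, mem_insert_self _ _⟩ fun j => if j = i then x i else η i j + x j

theorem le_reducedCoord [Add α] (J : Finset ι) (η : ι → ι → α) (x : ι → α) (i : ι) :
    x i ≤ reducedCoord J η x i := by
  have := le_sup' (fun j => if j = i then x i else η i j + x j) (mem_insert_self i Jᶜ)
  rwa [if_pos rfl] at this

theorem add_le_reducedCoord [Add α] {J : Finset ι} (η : ι → ι → α) (x : ι → α) {i j : ι}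
    (hi : i ∈ J) (hj : j ∉ J) : η i j + x j ≤ reducedCoord J η x i := by
  have hji : j ≠ i := fun h => hj (h ▸ hi)
  have := le_sup' (fun j' => if j' = i then x i else η i j' + x j')
    (mem_insert_of_mem (s := Jᶜ) (b := i) (mem_compl.mpr hj))
  rwa [if_neg hji] at this

theorem reducedCoord_le [Add α] {J : Finset ι} {η : ι → ι → α} {x : ι → α} {i : ι} {c : α}
    (hxi : x i ≤ c) (hη : ∀ j ∉ J, η i j + x j ≤ c) : reducedCoord J η x i ≤ c := by
  refine sup'_le _ _ fun j hj => ?_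
  split_ifs with hji
  · exact hxi
  · exact hη j (mem_compl.mp ((mem_insert.mp hj).resolve_left hji))

variable [AddCommGroup α] [IsOrderedAddMonoid α]

theorem sup'_add_reducedCoord_eq {J : Finset ι} (hJ : J.Nonempty) (a : ι → α)
    (η : ι → ι → α) (hdep : ∀ j ∉ J, a j = J.sup' hJ fun i => a i + η i j) (x : ι → α) :
    (J.sup' hJ fun i => a i + reducedCoord J η x i) =
      univ.sup' (hJ.mono (subset_univ J)) fun j => a j + x j := by
  set S := univ.sup' (hJ.mono (subset_univ J)) fun j => a j + x j
  have hS : ∀ j, a j + x j ≤ S := fun j => le_sup' (fun j => a j + x j) (mem_univ j)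
  apply le_antisymm
  · refine sup'_le _ _ fun i hi => ?_
    rw [← le_sub_iff_add_le']
    refine reducedCoord_le (le_sub_iff_add_le'.mpr (hS i)) fun j hj => ?_
    have hij : a i + η i j ≤ a j := hdep j hj ▸ le_sup' (fun i => a i + η i j) hi
    rw [le_sub_iff_add_le', ← add_assoc]
    exact (add_le_add_left hij (x j)).trans (hS j)
  · refine sup'_le _ _ fun j _ => ?_
    by_cases hj : j ∈ J
    · exact (add_le_add_right (le_reducedCoord J η x j) (a j)).trans
        (le_sup' (fun i => a i + reducedCoord J η x i) hj)
    · obtain ⟨i, hi, hmax⟩ := exists_mem_eq_sup' hJ fun i => a i + η i j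
      calc a j + x j = a i + (η i j + x j) := by rw [hdep j hj, hmax, add_assoc]
        _ ≤ a i + reducedCoord J η x i := add_le_add_right (add_le_reducedCoord η x hi hj) _
        _ ≤ _ := le_sup' (fun i => a i + reducedCoord J η x i) hi

end ReducedSolution

theorem stmt_10_general (m n : ℕ) (hn : 0 < n)
    (A : Fin m → Fin n → ℝ) (b : Fin m → ℝ)
    (J : Finset (Fin n)) (hJ : J.Nonempty)
    (η : Fin n → Fin n → ℝ)
    (hdep : ∀ j ∉ J, ∀ k : Fin m, A k j = J.sup' hJ fun i => A k i + η i j)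
    (x : Fin n → ℝ) (hx : IsMaxPlusSolution hn A b x)
    (y : Fin n → ℝ)
    (hy : ∀ i ∈ J, y i = (insert i Jᶜ).sup' ⟨i, mem_insert_self _ _⟩
      fun j => if j = i then x i else η i j + x j) :
    ∀ k : Fin m, (J.sup' hJ fun i => A k i + y i) = b k := by
  intro k
  have hyJ : ∀ i ∈ J, A k i + y i = A k i + reducedCoord J η x i := fun i hi => by
    rw [hy i hi]; rfl
  rw [sup'_congr hJ rfl hyJ, sup'_add_reducedCoord_eq hJ (A k) η (fun j hj => hdep j hj k) x]
  exact hx k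

/-- If every column of `A` outside the nonempty column set `J` is a max-plus linear
combination (with coefficients `η i j`) of the columns in `J`, and `x` solves the full
system `AX = b`, then `y_i = max (x_i, max_{j ∉ J} (η_{ij} + x_j))` (the inner max
omitted when `J` is everything) solves the column-restricted system. -/
theorem stmt_10 (m n : ℕ) (hm : 0 < m) (hn : 0 < n)
    (A : Fin m → Fin n → ℝ) (b : Fin m → ℝ)
    (J : Finset (Fin n)) (hJ : J.Nonempty)
    (η : Fin n → Fin n → ℝ)
    (hdep : ∀ j ∉ J, ∀ k : Fin m, A k j = J.sup' hJ fun i => A k i + η i j)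
    (x : Fin n → ℝ) (hx : IsMaxPlusSolution hn A b x)
    (y : Fin n → ℝ)
    (hy : ∀ i ∈ J, y i = (insert i Jᶜ).sup' ⟨i, mem_insert_self _ _⟩
      fun j => if j = i then x i else η i j + x j) :
    ∀ k : Fin m, (J.sup' hJ fun i => A k i + y i) = b k :=
  stmt_10_general m n hn A b J hJ η hdep x hx y hy
end

section
/- Let m, n ≥ 1, let A ∈ ℝ^{m×n} and b ∈ ℝ^m, let J be a nonempty subset of the column indices {1,…,n}, and suppose that for each j ∉ J there exist real scalars η_{ij} (i ∈ J) with a_{kj} = max_{i∈J}(a_{ki} + η_{ij}) for every row k. If y ∈ ℝ^J is a solution of the column-restricted system with matrix (a_{ki})_{k∈{1,…,m}, i∈J} and right-hand side b, then the vector x ∈ ℝ^n defined by x_i = y_i for i ∈ J and x_j = min_{i∈J}(y_i − η_{ij}) for j ∉ J is a solution of the full max-plus linear system AX=b. -/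
open Finset

/-!
Every column `j ∉ J` is dominated on the solution: if `a_{kj} = a_{ki₀} + η_{i₀j}` attains the
maximum defining column `j`, then `x_j ≤ y_{i₀} - η_{i₀j}` gives
`a_{kj} + x_j ≤ a_{ki₀} + y_{i₀} ≤ b_k`. Hence adding these columns does not change the
row maxima of the restricted system.
-/

theorem Finset.sup'_add_add_inf'_sub_le {ι α : Type*} [AddCommGroup α] [LinearOrder α]
    [IsOrderedAddMonoid α] {s : Finset ι} (hs : s.Nonempty) (a η y : ι → α) :
    (s.sup' hs fun i => a i + η i) + (s.inf' hs fun i => y i - η i) ≤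
      s.sup' hs fun i => a i + y i := by
  obtain ⟨i₀, hi₀, hmax⟩ := exists_mem_eq_sup' hs fun i => a i + η i
  calc (s.sup' hs fun i => a i + η i) + (s.inf' hs fun i => y i - η i)
      ≤ a i₀ + η i₀ + (y i₀ - η i₀) := by rw [hmax]; gcongr; exact inf'_le _ hi₀
    _ = a i₀ + y i₀ := by abel
    _ ≤ s.sup' hs fun i => a i + y i := le_sup' (fun i => a i + y i) hi₀

theorem Finset.sup'_eq_of_subset_of_le {β γ : Type*} [SemilatticeSup β] {s t : Finset γ}
    (hs : s.Nonempty) (ht : t.Nonempty) (hst : s ⊆ t) {f : γ → β}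
    (hle : ∀ j ∈ t, f j ≤ s.sup' hs f) : t.sup' ht f = s.sup' hs f :=
  le_antisymm (sup'_le ht f hle) (sup'_mono f hst hs)

theorem stmt_11_general (m n : ℕ) (hn : 0 < n)
    (A : Fin m → Fin n → ℝ) (b : Fin m → ℝ)
    (J : Finset (Fin n)) (hJ : J.Nonempty)
    (η : Fin n → Fin n → ℝ)
    (hdep : ∀ j ∉ J, ∀ k : Fin m, A k j = J.sup' hJ fun i => A k i + η i j)
    (y : Fin n → ℝ)
    (hy : ∀ k : Fin m, (J.sup' hJ fun i => A k i + y i) = b k)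
    (x : Fin n → ℝ)
    (hxJ : ∀ i ∈ J, x i = y i)
    (hxJc : ∀ j ∉ J, x j = J.inf' hJ fun i => y i - η i j) :
    IsMaxPlusSolution hn A b x := by
  intro k
  have hrestricted : (J.sup' hJ fun i => A k i + x i) = b k := by
    rw [← hy k]
    exact sup'_congr hJ rfl fun i hi => by rw [hxJ i hi]
  rw [← hrestricted]
  refine sup'_eq_of_subset_of_le hJ ⟨⟨0, hn⟩, mem_univ _⟩ (subset_univ J) fun j _ => ?_
  by_cases hj : j ∈ J
  · exact le_sup' (fun i => A k i + x i) hj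
  · rw [hrestricted, ← hy k, hxJc j hj, hdep j hj k]
    exact sup'_add_add_inf'_sub_le hJ (A k) (fun i => η i j) y

/-- If every column of `A` outside the nonempty column set `J` is a max-plus linear
combination (with coefficients `η i j`) of the columns in `J`, and `y` solves the
column-restricted system, then `x` with `x_i = y_i` on `J` and
`x_j = min_{i ∈ J}(y_i - η_{ij})` off `J` solves the full system `AX = b`. -/
theorem stmt_11 (m n : ℕ) (hm : 0 < m) (hn : 0 < n)
    (A : Fin m → Fin n → ℝ) (b : Fin m → ℝ)
    (J : Finset (Fin n)) (hJ : J.Nonempty)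
    (η : Fin n → Fin n → ℝ)
    (hdep : ∀ j ∉ J, ∀ k : Fin m, A k j = J.sup' hJ fun i => A k i + η i j)
    (y : Fin n → ℝ)
    (hy : ∀ k : Fin m, (J.sup' hJ fun i => A k i + y i) = b k)
    (x : Fin n → ℝ)
    (hxJ : ∀ i ∈ J, x i = y i)
    (hxJc : ∀ j ∉ J, x j = J.inf' hJ fun i => y i - η i j) :
    IsMaxPlusSolution hn A b x :=
  stmt_11_general m n hn A b J hJ η hdep y hy x hxJ hxJc
end

section
/- Let m, n ≥ 1, let A ∈ ℝ^{m×n} and b ∈ ℝ^m, let H be a nonempty subset of the row indices {1,…,m}, and suppose that every row of A outside H is a max-plus linear combination of the rows in H and that b is compatible with the same combination: for each i ∉ H there exist real scalars ξ_{ij} (j ∈ H) with a_{ik} = max_{j∈H}(a_{jk} + ξ_{ij}) for every column k, and b_i = max_{j∈H}(b_j + ξ_{ij}). Then x ∈ ℝ^n is a solution of the full max-plus linear system AX=b if and only if x is a solution of the row-restricted system consisting of only the equations max_{1≤k≤n}(a_{jk} + x_k) = b_j for j ∈ H. -/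
open Finset

/-- If every row of `A` outside the nonempty row set `H` is a max-plus linear
combination of the rows in `H`, with `b` compatible with the same combination, then
`x` solves the full max-plus system `AX = b` iff it solves the row-restricted system
consisting of the equations indexed by `H`. -/
theorem stmt_12 (m n : ℕ) (hm : 0 < m) (hn : 0 < n)
    (A : Fin m → Fin n → ℝ) (b : Fin m → ℝ)
    (H : Finset (Fin m)) (hH : H.Nonempty)
    (hrow : ∀ i ∉ H, ∃ ξ : Fin m → ℝ,
      (∀ k : Fin n, A i k = H.sup' hH fun j => A j k + ξ j) ∧
        b i = H.sup' hH fun j => b j + ξ j)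
    (x : Fin n → ℝ) :
    IsMaxPlusSolution hn A b x ↔
      ∀ j ∈ H, (univ.sup' ⟨⟨0, hn⟩, mem_univ _⟩ fun k => A j k + x k) = b j := by
  constructor
  · intro hsol j _
    exact hsol j
  · intro hH' i
    by_cases hi : i ∈ H
    · exact hH' i hi
    · obtain ⟨ξ, hA, hb⟩ := hrow i hi
      have key : (univ.sup' ⟨⟨0, hn⟩, mem_univ _⟩ fun k => A i k + x k)
          = H.sup' hH fun j => (univ.sup' ⟨⟨0, hn⟩, mem_univ _⟩ fun k => A j k + x k) + ξ j := by
        have hu : (univ : Finset (Fin n)).Nonempty := ⟨⟨0, hn⟩, mem_univ _⟩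
        change (univ.sup' hu fun k => A i k + x k)
            = H.sup' hH fun j => (univ.sup' hu fun k => A j k + x k) + ξ j
        simp only [Finset.sup'_add]
        rw [Finset.sup'_comm]
        apply Finset.sup'_congr _ rfl
        intro k _
        rw [hA k, Finset.sup'_add]
        apply Finset.sup'_congr _ rfl
        intro j _
        ring
      rw [key, hb]
      apply Finset.sup'_congr _ rfl
      intro j hj
      rw [hH' j hj]
end

section
/- Let m, n ≥ 1, let A ∈ ℝ^{m×n} and b ∈ ℝ^m, let H be a nonempty subset of the row indices {1,…,m}, and suppose that for each i ∉ H there exist real scalars ξ_{ij} (j ∈ H) with a_{ik} = max_{j∈H}(a_{jk} + ξ_{ij}) for every column k. If the max-plus linear system AX=b has a solution x ∈ ℝ^n, then necessarily b_i = max_{j∈H}(b_j + ξ_{ij}) for every i ∉ H. -/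
open Finset

/-- If every row of `A` outside the nonempty row set `H` is a max-plus linear
combination of the rows in `H` with coefficients `ξ i j`, and the max-plus system
`AX = b` has a solution, then `b_i = max_{j ∈ H}(b_j + ξ_{ij})` for every `i ∉ H`. -/
theorem stmt_13 (m n : ℕ) (hm : 0 < m) (hn : 0 < n)
    (A : Fin m → Fin n → ℝ) (b : Fin m → ℝ)
    (H : Finset (Fin m)) (hH : H.Nonempty)
    (ξ : Fin m → Fin m → ℝ)
    (hrow : ∀ i ∉ H, ∀ k : Fin n, A i k = H.sup' hH fun j => A j k + ξ i j)
    (x : Fin n → ℝ) (hx : IsMaxPlusSolution hn A b x) :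
    ∀ i ∉ H, b i = H.sup' hH fun j => b j + ξ i j := by
  intro i hi
  have hb := hx i
  calc b i = univ.sup' ⟨⟨0, hn⟩, mem_univ _⟩ fun k => A i k + x k := hb.symm
    _ = univ.sup' ⟨⟨0, hn⟩, mem_univ _⟩ fun k =>
        H.sup' hH fun j => (A j k + ξ i j) + x k := by
        apply Finset.sup'_congr _ rfl
        intro k _
        rw [hrow i hi k, Finset.sup'_add]
    _ = H.sup' hH fun j => univ.sup' ⟨⟨0, hn⟩, mem_univ _⟩ fun k =>
        (A j k + ξ i j) + x k := Finset.sup'_comm _ hH _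
    _ = H.sup' hH fun j => b j + ξ i j := by
        apply Finset.sup'_congr _ rfl
        intro j _
        rw [← hx j]
        erw [Finset.sup'_add]
        congr 1
        ext k
        ring
end

section
/- Let m, n ≥ 1, let A ∈ ℝ^{m×n} and b ∈ ℝ^m, let J be a nonempty subset of the column indices and H a nonempty subset of the row indices. Suppose: (i) for each column j ∉ J there exist real scalars η_{ij} (i ∈ J) with a_{kj} = max_{i∈J}(a_{ki} + η_{ij}) for every row k; (ii) for each row i ∉ H there exist real scalars ξ_{ij} (j ∈ H) with a_{ik} = max_{j∈H}(a_{jk} + ξ_{ij}) for every column k, and b_i = max_{j∈H}(b_j + ξ_{ij}). Then the full max-plus linear system AX=b has a solution x ∈ ℝ^n if and only if the reduced system ĀY = b̄, with matrix Ā = (a_{ji})_{j∈H, i∈J}, right-hand side b̄ = (b_j)_{j∈H}, and unknown y ∈ ℝ^J, has a solution. -/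
open Finset

/-- If every column of `A` outside the nonempty column set `J` is a max-plus linear
combination of the columns in `J`, and every row of `A` outside the nonempty row set
`H` is a max-plus linear combination of the rows in `H` with `b` compatible with the
same combination, then the full max-plus system `AX = b` has a solution iff the
reduced system `ĀY = b̄` (submatrix on rows `H` and columns `J`, right-hand side the
restriction of `b` to `H`) has a solution `y ∈ ℝ^J`. -/
theorem stmt_14 (m n : ℕ) (hm : 0 < m) (hn : 0 < n)
    (A : Fin m → Fin n → ℝ) (b : Fin m → ℝ)
    (J : Finset (Fin n)) (hJ : J.Nonempty)
    (H : Finset (Fin m)) (hH : H.Nonempty)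
    (hcol : ∀ j ∉ J, ∃ η : Fin n → ℝ, ∀ k : Fin m,
      A k j = J.sup' hJ fun i => A k i + η i)
    (hrow : ∀ i ∉ H, ∃ ξ : Fin m → ℝ,
      (∀ k : Fin n, A i k = H.sup' hH fun j => A j k + ξ j) ∧
        b i = H.sup' hH fun j => b j + ξ j) :
    (∃ x : Fin n → ℝ, IsMaxPlusSolution hn A b x) ↔
      (∃ y : {i : Fin n // i ∈ J} → ℝ, ∀ j ∈ H,
        (J.attach.sup' (attach_nonempty_iff.mpr hJ) fun i => A j i.1 + y i) = b j) := by
  choose η hη using hcol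
  have hJa : J.attach.Nonempty := attach_nonempty_iff.mpr hJ
  constructor
  · rintro ⟨x, hx⟩
    set y : {i : Fin n // i ∈ J} → ℝ := fun i =>
      univ.sup' ⟨⟨0, hn⟩, mem_univ _⟩ fun j =>
        if h : j ∈ J then x i.1 else η j h i.1 + x j with hy
    refine ⟨y, fun k _ => ?_⟩
    have hb : ∀ j : Fin n, A k j + x j ≤ b k := fun j =>
      (hx k) ▸ le_sup' (fun j => A k j + x j) (mem_univ j)
    apply le_antisymm
    · apply sup'_le
      intro i _
      have hyb : y i ≤ b k - A k i.1 := by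
        apply sup'_le
        intro j _
        split_ifs with h
        · have := hb i.1; linarith
        · have h1 : A k i.1 + η j h i.1 ≤ A k j := by
            rw [hη j h k]
            exact le_sup' (fun i' => A k i' + η j h i') i.2
          have := hb j; linarith
      linarith
    · rw [← hx k]
      apply sup'_le
      intro j _
      by_cases h : j ∈ J
      · have hxy : x j ≤ y ⟨j, h⟩ := by
          have := le_sup' (fun j' => if h' : j' ∈ J then x j else η j' h' j + x j')
            (mem_univ j)
          simp only [dif_pos h] at this
          exact this
        calc A k j + x j ≤ A k j + y ⟨j, h⟩ := by linarith
          _ ≤ _ := le_sup' (fun i => A k i.1 + y i) (mem_attach J ⟨j, h⟩)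
      · rw [hη j h k]
        have hsup : (J.sup' hJ fun i => A k i + η j h i) ≤
            (J.attach.sup' hJa fun i => A k i.1 + y i) - x j := by
          apply sup'_le
          intro i hi
          have hxy : η j h i + x j ≤ y ⟨i, hi⟩ := by
            have := le_sup' (fun j' => if h' : j' ∈ J then x i else η j' h' i + x j')
              (mem_univ j)
            simp only [dif_neg h] at this
            exact this
          have := le_sup' (fun i' => A k i'.1 + y i') (mem_attach J ⟨i, hi⟩)
          simp only at this
          linarith
        linarith
  · rintro ⟨y, hy⟩
    choose ξ hξ using hrow
    set x : Fin n → ℝ := fun j =>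
      if h : j ∈ J then y ⟨j, h⟩ else J.attach.inf' hJa fun i => y i - η j h i.1 with hxdef
    have hS : ∀ k : Fin m,
        (J.attach.sup' hJa fun i => A k i.1 + y i) = b k := by
      intro k
      by_cases hk : k ∈ H
      · exact hy k hk
      · apply le_antisymm
        · apply sup'_le
          intro i _
          rw [(hξ k hk).1 i.1, (hξ k hk).2]
          have hsup : (H.sup' hH fun j => A j i.1 + ξ k hk j) ≤
              (H.sup' hH fun j => b j + ξ k hk j) - y i := by
            apply sup'_le
            intro j hj
            have h1 : A j i.1 + y i ≤ b j := by
              rw [← hy j hj]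
              exact le_sup' (fun i' => A j i'.1 + y i') (mem_attach J i)
            have h2 := le_sup' (fun j' => b j' + ξ k hk j') hj
            linarith
          linarith
        · rw [(hξ k hk).2]
          apply sup'_le
          intro j hj
          rw [← hy j hj]
          have hsup : (J.attach.sup' hJa fun i => A j i.1 + y i) ≤
              (J.attach.sup' hJa fun i => A k i.1 + y i) - ξ k hk j := by
            apply sup'_le
            intro i _
            have h1 : A j i.1 + ξ k hk j ≤ A k i.1 := by
              rw [(hξ k hk).1 i.1]
              exact le_sup' (fun j' => A j' i.1 + ξ k hk j') hj
            have h2 := le_sup' (fun i' => A k i'.1 + y i') (mem_attach J i)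
            linarith
          linarith
    refine ⟨x, fun k => ?_⟩
    rw [← hS k]
    apply le_antisymm
    · apply sup'_le
      intro j _
      by_cases h : j ∈ J
      · have hxj : x j = y ⟨j, h⟩ := by simp [hxdef, h]
        rw [hxj]
        exact le_sup' (fun i => A k i.1 + y i) (mem_attach J ⟨j, h⟩)
      · have hxj : x j = J.attach.inf' hJa fun i => y i - η j h i.1 := by
          simp [hxdef, h]
        rw [hxj, hη j h k]
        have hsup : (J.sup' hJ fun i => A k i + η j h i) ≤
            (J.attach.sup' hJa fun i => A k i.1 + y i) -
              (J.attach.inf' hJa fun i => y i - η j h i.1) := by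
          apply sup'_le
          intro i hi
          have h1 : (J.attach.inf' hJa fun i' => y i' - η j h i'.1) ≤
              y ⟨i, hi⟩ - η j h i := inf'_le _ (mem_attach J ⟨i, hi⟩)
          have h2 := le_sup' (fun i' => A k i'.1 + y i') (mem_attach J ⟨i, hi⟩)
          simp only at h2
          linarith
        linarith
    · apply sup'_le
      intro i _
      have hxi : x i.1 = y i := by
        simp only [hxdef, dif_pos i.2]
      calc A k i.1 + y i = A k i.1 + x i.1 := by rw [hxi]
        _ ≤ _ := le_sup' (fun j => A k j + x j) (mem_univ i.1)
end
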